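/- arXiv:1702.04003 — 4 statements merged into one kernel-verified Lean document; each statement's English description precedes it below -/
import Mathlib

section
/- Let p ∈ (1,∞) and let O be a nonempty collection of Borel probability measures on ℝ^n with sup_{μ∈O} ∫_{ℝ^n} |z|^p dμ(z) < ∞, and which is sequentially compact with respect to E-weak convergence: every sequence {μ_j} ⊂ O has a subsequence {μ_{j_k}} and a measure μ ∈ O with ∫ g dμ_{j_k} → ∫ g dμ for every g ∈ E. Let F : ℝ^n → [0,∞] be lower semi-continuous. Then the function U(ξ) := inf_{μ∈O} ∫_{ℝ^n} F(z+ξ) dμ(z) is lower semi-continuous on ℝ^n. -/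
/-!
A lower semicontinuous `F ≥ 0` is the increasing supremum of the bounded Lipschitz functions
`G_m x = inf_y (min (F y) m + m |x - y|)`. Each `G_m(· + ξ)` is bounded, hence lies in `E`, and
being Lipschitz it tolerates moving the shift along with the measures, so
`∫ G_m(z + ξ_k) dμ_k → ∫ G_m(z + ξ) dμ` along an `E`-weakly convergent subsequence. Monotone
convergence in `m` then gives `∫ F(z + ξ) dμ ≤ liminf ∫ F(z + ξ_k) dμ_k`, and sequential
compactness of `O` supplies the limit measure `μ ∈ O` for near-minimisers `μ_k` at `ξ_k`.
-/

open MeasureTheory Filter Topology ENNReal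

noncomputable section

/-- ℝ^n as a Euclidean space -/
abbrev Vec (n : ℕ) := EuclideanSpace ℝ (Fin n)

variable {N n : ℕ}

/-- membership in the space E: continuous functions g with g(z)/(1+|z|^p) having a finite
limit as |z| → ∞ -/
def MemE (p : ℝ) (g : Vec n → ℝ) : Prop :=
  Continuous g ∧ ∃ l : ℝ, Tendsto (fun z => g z / (1 + ‖z‖ ^ p)) (cocompact (Vec n)) (nhds l)

section LipschitzApprox

variable {X : Type*} [PseudoMetricSpace X] (F : X → ℝ≥0∞)

def lipschitzApprox (m : ℕ) (x : X) : ℝ :=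
  ⨅ y, truncateToReal m (F y) + m * dist x y

lemma lipschitzApprox_bddBelow (m : ℕ) (x : X) :
    BddBelow (Set.range fun y => truncateToReal m (F y) + m * dist x y) :=
  ⟨0, by rintro _ ⟨y, rfl⟩; exact add_nonneg truncateToReal_nonneg (by positivity)⟩

lemma lipschitzApprox_nonneg (m : ℕ) (x : X) : 0 ≤ lipschitzApprox F m x :=
  Real.iInf_nonneg fun _ => add_nonneg truncateToReal_nonneg (by positivity)

lemma lipschitzApprox_le_truncateToReal (m : ℕ) (x : X) :
    lipschitzApprox F m x ≤ truncateToReal m (F x) :=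
  (ciInf_le (lipschitzApprox_bddBelow F m x) x).trans_eq (by simp)

lemma lipschitzApprox_le_natCast (m : ℕ) (x : X) : lipschitzApprox F m x ≤ m := by
  simpa using (lipschitzApprox_le_truncateToReal F m x).trans
    (truncateToReal_le (natCast_ne_top m))

lemma ofReal_lipschitzApprox_le (m : ℕ) (x : X) : ENNReal.ofReal (lipschitzApprox F m x) ≤ F x :=
  calc ENNReal.ofReal (lipschitzApprox F m x)
      ≤ ENNReal.ofReal (truncateToReal m (F x)) :=
        ENNReal.ofReal_le_ofReal (lipschitzApprox_le_truncateToReal F m x)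
    _ = min (m : ℝ≥0∞) (F x) :=
        ofReal_toReal (ne_top_of_le_ne_top (natCast_ne_top m) (min_le_left _ _))
    _ ≤ F x := min_le_right _ _

lemma lipschitzWith_lipschitzApprox (m : ℕ) : LipschitzWith m (lipschitzApprox F m) := by
  refine LipschitzWith.of_le_add_mul _ fun x x' => ?_
  have : Nonempty X := ⟨x⟩
  rw [← sub_le_iff_le_add]
  refine le_ciInf fun y => sub_le_iff_le_add.2 ?_
  calc lipschitzApprox F m x ≤ truncateToReal m (F y) + m * dist x y :=
        ciInf_le (lipschitzApprox_bddBelow F m x) y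
    _ ≤ truncateToReal m (F y) + m * dist x' y + m * dist x x' := by
        have := dist_triangle x x' y
        nlinarith [(m.cast_nonneg : (0 : ℝ) ≤ m)]

lemma lipschitzApprox_mono {m m' : ℕ} (h : m ≤ m') (x : X) :
    lipschitzApprox F m x ≤ lipschitzApprox F m' x := by
  have : Nonempty X := ⟨x⟩
  refine le_ciInf fun y => (ciInf_le (lipschitzApprox_bddBelow F m x) y).trans ?_
  gcongr
  exact toReal_mono (ne_top_of_le_ne_top (natCast_ne_top m') (min_le_left _ _))
    (min_le_min_right _ (by exact_mod_cast h))

variable {F}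

lemma LowerSemicontinuous.iSup_ofReal_lipschitzApprox (hF : LowerSemicontinuous F) (x : X) :
    ⨆ m : ℕ, ENNReal.ofReal (lipschitzApprox F m x) = F x := by
  refine le_antisymm (iSup_le fun m => ofReal_lipschitzApprox_le F m x) (le_of_forall_lt ?_)
  intro c hc
  obtain ⟨b, hcb, hbF⟩ := exists_between hc
  obtain ⟨δ, hδ, hball⟩ := Metric.eventually_nhds_iff.1 (hF x b hbF)
  obtain ⟨m, hm⟩ := exists_nat_ge (max b.toReal (b.toReal / δ))
  have hbm : b ≤ m := by
    rw [← ofReal_toReal hbF.ne_top, ← ofReal_natCast]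
    exact ENNReal.ofReal_le_ofReal ((le_max_left _ _).trans hm)
  have hbδ : b.toReal ≤ m * δ := (div_le_iff₀ hδ).1 ((le_max_right _ _).trans hm)
  -- Near `x` the truncated value `min (F y) m` is already `≥ b`; away from `x` the penalty is.
  have hb : b.toReal ≤ lipschitzApprox F m x := by
    have : Nonempty X := ⟨x⟩
    refine le_ciInf fun y => ?_
    by_cases hy : dist y x < δ
    · have : b.toReal ≤ truncateToReal m (F y) := by
        rw [← truncateToReal_eq_toReal (natCast_ne_top m) hbm]
        exact monotone_truncateToReal (natCast_ne_top m) (hball hy).le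
      nlinarith [dist_nonneg (x := x) (y := y), (m.cast_nonneg : (0 : ℝ) ≤ m)]
    · rw [dist_comm] at hy
      nlinarith [truncateToReal_nonneg (t := m) (x := F y), (m.cast_nonneg : (0 : ℝ) ≤ m)]
  calc c < b := hcb
    _ ≤ ENNReal.ofReal (lipschitzApprox F m x) := (le_ofReal_iff_toReal_le hbF.ne_top
        (lipschitzApprox_nonneg F m x)).2 hb
    _ ≤ _ := le_iSup (fun m : ℕ => ENNReal.ofReal (lipschitzApprox F m x)) m

lemma LowerSemicontinuous.lintegral_comp_eq_iSup_ofReal_integral [MeasurableSpace X]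
    [OpensMeasurableSpace X] (hF : LowerSemicontinuous F) {Y : Type*} [MeasurableSpace Y]
    {φ : Y → X} (hφ : Measurable φ) (ν : Measure Y) [IsFiniteMeasure ν] :
    ∫⁻ z, F (φ z) ∂ν = ⨆ m : ℕ, ENNReal.ofReal (∫ z, lipschitzApprox F m (φ z) ∂ν) := by
  have hmeas : ∀ m, Measurable fun z => lipschitzApprox F m (φ z) :=
    fun m => (lipschitzWith_lipschitzApprox F m).continuous.measurable.comp hφ
  have hint : ∀ m, Integrable (fun z => lipschitzApprox F m (φ z)) ν := fun m =>
    Integrable.of_bound (hmeas m).aestronglyMeasurable m (Eventually.of_forall fun z => by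
      rw [Real.norm_of_nonneg (lipschitzApprox_nonneg F m _)]
      exact lipschitzApprox_le_natCast F m _)
  calc ∫⁻ z, F (φ z) ∂ν = ∫⁻ z, ⨆ m : ℕ, ENNReal.ofReal (lipschitzApprox F m (φ z)) ∂ν := by
        simp_rw [hF.iSup_ofReal_lipschitzApprox]
    _ = ⨆ m : ℕ, ∫⁻ z, ENNReal.ofReal (lipschitzApprox F m (φ z)) ∂ν :=
        lintegral_iSup (fun m => (hmeas m).ennreal_ofReal)
          fun m m' h z => ENNReal.ofReal_le_ofReal (lipschitzApprox_mono F h _)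
    _ = _ := by
        simp_rw [ofReal_integral_eq_lintegral_ofReal (hint _)
          (Eventually.of_forall fun z => lipschitzApprox_nonneg F _ (φ z))]

end LipschitzApprox

section Translation

variable {E : Type*} [NormedAddCommGroup E] [MeasurableSpace E] [BorelSpace E]

lemma tendsto_integral_comp_add_of_lipschitzWith {G : E → ℝ} {K : NNReal} (hG : LipschitzWith K G)
    {C : ℝ} (hC : ∀ z, |G z| ≤ C) {ι : Type*} {l : Filter ι} {νs : ι → Measure E}
    [∀ i, IsProbabilityMeasure (νs i)] {ξs : ι → E} {ξ : E} (hξ : Tendsto ξs l (𝓝 ξ)) {L : ℝ}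
    (hL : Tendsto (fun i => ∫ z, G (z + ξ) ∂νs i) l (𝓝 L)) :
    Tendsto (fun i => ∫ z, G (z + ξs i) ∂νs i) l (𝓝 L) := by
  have hint : ∀ (ν : Measure E) [IsProbabilityMeasure ν] (a : E),
      Integrable (fun z => G (z + a)) ν := fun ν _ a =>
    Integrable.of_bound (hG.continuous.comp (continuous_add_const a)).aestronglyMeasurable C
      (Eventually.of_forall fun z => hC _)
  have hshift : Tendsto (fun i => K * dist ξ (ξs i)) l (𝓝 0) := by
    simpa using ((tendsto_const_nhds (x := ξ)).dist hξ).const_mul (K : ℝ)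
  refine hL.congr_dist (squeeze_zero (fun _ => dist_nonneg) (fun i => ?_) hshift)
  rw [dist_eq_norm, ← integral_sub (hint _ _) (hint _ _)]
  simpa using norm_integral_le_of_norm_le_const (μ := νs i)
    (f := fun z => G (z + ξ) - G (z + ξs i)) (Eventually.of_forall fun z => by
      simpa [← dist_eq_norm] using hG.dist_le_mul (z + ξ) (z + ξs i))

lemma lintegral_comp_add_le_of_forall_tendsto_integral {F : E → ℝ≥0∞}
    (hF : LowerSemicontinuous F) {ν : Measure E} [IsFiniteMeasure ν] {νs : ℕ → Measure E}
    [∀ k, IsProbabilityMeasure (νs k)]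
    (hν : ∀ g : E → ℝ, Continuous g → (∃ C, ∀ z, |g z| ≤ C) →
      Tendsto (fun k => ∫ z, g z ∂νs k) atTop (𝓝 (∫ z, g z ∂ν)))
    {ξs : ℕ → E} {ξ : E} (hξ : Tendsto ξs atTop (𝓝 ξ)) {c : ℝ≥0∞}
    (hc : ∀ k, ∫⁻ z, F (z + ξs k) ∂νs k ≤ c) :
    ∫⁻ z, F (z + ξ) ∂ν ≤ c := by
  rw [hF.lintegral_comp_eq_iSup_ofReal_integral (continuous_add_const ξ).measurable]
  refine iSup_le fun m => ?_
  set G := lipschitzApprox F m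
  have hGC : ∀ z, |G z| ≤ m := fun z => by
    rw [abs_of_nonneg (lipschitzApprox_nonneg F m z)]
    exact lipschitzApprox_le_natCast F m z
  have hlim := tendsto_integral_comp_add_of_lipschitzWith (lipschitzWith_lipschitzApprox F m)
    hGC hξ (hν _ ((lipschitzWith_lipschitzApprox F m).continuous.comp (continuous_add_const ξ))
      ⟨m, fun z => hGC _⟩)
  refine le_of_tendsto' ((ENNReal.continuous_ofReal.tendsto _).comp hlim) fun k => ?_
  calc ENNReal.ofReal (∫ z, G (z + ξs k) ∂νs k) ≤ ∫⁻ z, F (z + ξs k) ∂νs k := by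
        rw [hF.lintegral_comp_eq_iSup_ofReal_integral (continuous_add_const (ξs k)).measurable]
        exact le_iSup (fun m => ENNReal.ofReal (∫ z, lipschitzApprox F m (z + ξs k) ∂νs k)) m
    _ ≤ c := hc k

end Translation

lemma memE_of_abs_le {p : ℝ} (hp : 0 < p) {g : Vec n → ℝ} (hg : Continuous g) {C : ℝ}
    (hC : ∀ z, |g z| ≤ C) : MemE p g := by
  refine ⟨hg, 0, squeeze_zero_norm (fun z => ?_)
    (tendsto_const_nhds.div_atTop (tendsto_atTop_add_const_left _ 1
      ((tendsto_rpow_atTop hp).comp tendsto_norm_cocompact_atTop)) : Tendsto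
        (fun z : Vec n => C / (1 + ‖z‖ ^ p)) _ (𝓝 0))⟩
  have : 0 < 1 + ‖z‖ ^ p := by positivity
  rw [norm_div, Real.norm_of_nonneg this.le, Real.norm_eq_abs]
  gcongr
  exact hC z

theorem inf_over_compact_family_lsc_general
    (p : ℝ) (hp : 1 < p)
    (O : Set (Measure (Vec n)))
    (hprob : ∀ μ ∈ O, IsProbabilityMeasure μ)
    (hcpt : ∀ μs : ℕ → Measure (Vec n), (∀ j, μs j ∈ O) →
      ∃ φ : ℕ → ℕ, StrictMono φ ∧ ∃ μ ∈ O, ∀ g : Vec n → ℝ, MemE p g →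
        Tendsto (fun k => ∫ z, g z ∂(μs (φ k))) atTop (nhds (∫ z, g z ∂μ)))
    (F : Vec n → ℝ≥0∞) (hF : LowerSemicontinuous F) :
    LowerSemicontinuous (fun ξ : Vec n =>
      sInf {y : ℝ≥0∞ | ∃ μ ∈ O, y = ∫⁻ z, F (z + ξ) ∂μ}) := by
  refine lowerSemicontinuous_iff_isClosed_preimage.2 fun y => IsSeqClosed.isClosed ?_
  intro ξs ξ hξs hξ
  simp only [Set.mem_preimage, Set.mem_Iic] at hξs ⊢
  refine le_of_forall_gt_imp_ge_of_dense fun y' hy' => ?_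
  have hnear : ∀ j, ∃ μ ∈ O, ∫⁻ z, F (z + ξs j) ∂μ < y' := fun j => by
    obtain ⟨_, ⟨μ, hμO, rfl⟩, hμ⟩ := sInf_lt_iff.1 ((hξs j).trans_lt hy')
    exact ⟨μ, hμO, hμ⟩
  choose μs hμsO hμs using hnear
  obtain ⟨ψ, hψ, μ, hμO, hconv⟩ := hcpt μs hμsO
  have := hprob μ hμO
  have := fun k => hprob _ (hμsO (ψ k))
  calc sInf {y : ℝ≥0∞ | ∃ μ ∈ O, y = ∫⁻ z, F (z + ξ) ∂μ}
      ≤ ∫⁻ z, F (z + ξ) ∂μ := sInf_le ⟨μ, hμO, rfl⟩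
    _ ≤ y' := lintegral_comp_add_le_of_forall_tendsto_integral hF
        (fun g hg ⟨C, hC⟩ => hconv g (memE_of_abs_le (by linarith) hg hC))
        (hξ.comp hψ.tendsto_atTop) fun k => (hμs (ψ k)).le

/-- Lemma: if O is a nonempty collection of Borel probability measures on ℝⁿ with uniformly
bounded p-th moments, sequentially compact for E-weak convergence, and F : ℝⁿ → [0,∞] is
lower semi-continuous, then U(ξ) := inf_{μ ∈ O} ∫ F(z+ξ) dμ(z) is lower semi-continuous. -/
theorem inf_over_compact_family_lsc
    (hn : 0 < n) (p : ℝ) (hp : 1 < p)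
    (O : Set (Measure (Vec n))) (hOne : O.Nonempty)
    (hprob : ∀ μ ∈ O, IsProbabilityMeasure μ)
    (hmom : ∃ M : ℝ≥0∞, M < ⊤ ∧ ∀ μ ∈ O, (∫⁻ z, ENNReal.ofReal (‖z‖ ^ p) ∂μ) ≤ M)
    (hcpt : ∀ μs : ℕ → Measure (Vec n), (∀ j, μs j ∈ O) →
      ∃ φ : ℕ → ℕ, StrictMono φ ∧ ∃ μ ∈ O, ∀ g : Vec n → ℝ, MemE p g →
        Tendsto (fun k => ∫ z, g z ∂(μs (φ k))) atTop (nhds (∫ z, g z ∂μ)))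
    (F : Vec n → ℝ≥0∞) (hF : LowerSemicontinuous F) :
    LowerSemicontinuous (fun ξ : Vec n =>
      sInf {y : ℝ≥0∞ | ∃ μ ∈ O, y = ∫⁻ z, F (z + ξ) ∂μ}) :=
  inf_over_compact_family_lsc_general p hp O hprob hcpt F hF

end
end

section
/- Let D ⊂ ℝ^N be open, let r ∈ ℕ, and let A : D → ℝ^{m×n} be a matrix-valued function with C^∞ entries such that rank A(w) = r for every w ∈ D. Then for every w_0 ∈ D there exist an open neighbourhood D_0 ⊆ D of w_0 and matrix-valued functions U : D_0 → ℝ^{m×r} and B : D_0 → ℝ^{r×n}, both with C^∞ entries, such that for every w ∈ D_0: rank U(w) = r, rank B(w) = r, U(w)ᵀ U(w) = I_r, and A(w) = U(w) B(w). -/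
open Topology Matrix

noncomputable section

/-- Lemma (local smooth full-rank factorisation): a C^∞ matrix field of constant rank r
admits, near every point, a factorisation A = U B with C^∞ factors of rank r and UᵀU = I. -/
theorem local_full_rank_factorisation
    {N m n : ℕ} (hN : 0 < N) (hm : 0 < m) (hn : 0 < n) (r : ℕ)
    (D : Set (Vec N)) (hD : IsOpen D)
    (A : Vec N → Matrix (Fin m) (Fin n) ℝ)
    (hA : ∀ i j, ContDiffOn ℝ (⊤ : ℕ∞) (fun w => A w i j) D)
    (hrank : ∀ w ∈ D, (A w).rank = r)
    (w₀ : Vec N) (hw₀ : w₀ ∈ D) :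
    ∃ D₀ : Set (Vec N), IsOpen D₀ ∧ w₀ ∈ D₀ ∧ D₀ ⊆ D ∧
      ∃ (U : Vec N → Matrix (Fin m) (Fin r) ℝ) (B : Vec N → Matrix (Fin r) (Fin n) ℝ),
        (∀ i j, ContDiffOn ℝ (⊤ : ℕ∞) (fun w => U w i j) D₀) ∧
        (∀ i j, ContDiffOn ℝ (⊤ : ℕ∞) (fun w => B w i j) D₀) ∧
        ∀ w ∈ D₀, (U w).rank = r ∧ (B w).rank = r ∧
          (U w)ᵀ * U w = 1 ∧ A w = U w * B w := by
  classical
  have hr0 : (A w₀).rank = r := hrank w₀ hw₀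
  -- Step 1: choose r linearly independent columns of A w₀
  obtain ⟨c, hc⟩ : ∃ c : Fin r → Fin n,
      LinearIndependent ℝ (fun k : Fin r => (A w₀)ᵀ (c k)) := by
    obtain ⟨b, hbsub, hbspan, hbli⟩ := exists_linearIndependent ℝ (Set.range (A w₀)ᵀ)
    have hbfin : b.Finite := hbli.setFinite
    haveI : Fintype b := hbfin.fintype
    have hcard : Fintype.card b = r := by
      have h1 : Module.finrank ℝ (Submodule.span ℝ b) = b.toFinset.card :=
        finrank_span_set_eq_card hbli
      have h2 : Module.finrank ℝ (Submodule.span ℝ (Set.range (A w₀)ᵀ)) = r := by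
        exact (Matrix.rank_eq_finrank_span_cols (A w₀)).symm.trans hr0
      rw [hbspan, h2] at h1
      rw [← Set.toFinset_card, ← h1]
    obtain ⟨e⟩ : Nonempty (Fin r ≃ b) := ⟨(Fintype.equivFinOfCardEq hcard).symm⟩
    have hex : ∀ x : b, ∃ j : Fin n, (A w₀)ᵀ j = (x : Fin m → ℝ) := fun x => hbsub x.2
    refine ⟨fun k => (hex (e k)).choose, ?_⟩
    have : (fun k : Fin r => (A w₀)ᵀ ((hex (e k)).choose)) =
        fun k : Fin r => ((e k : b) : Fin m → ℝ) := by
      funext k; exact (hex (e k)).choose_spec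
    rw [this]
    exact hbli.comp (fun k => e k) (fun a b hab => e.injective hab)
  -- matrices V and G
  set V : Vec N → Matrix (Fin m) (Fin r) ℝ := fun w => Matrix.of fun i k => A w i (c k)
    with hVdef
  set G : Vec N → Matrix (Fin r) (Fin r) ℝ := fun w => (V w)ᵀ * V w with hGdef
  have hVcolsA : ∀ w, ∀ k, (V w)ᵀ k = (A w)ᵀ (c k) := by
    intro w k; funext i; rfl
  -- smoothness of entries of V and G on D
  have hVsm : ∀ i k, ContDiffOn ℝ (⊤ : ℕ∞) (fun w => V w i k) D := fun i k => hA i (c k)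
  have hGsm : ∀ k l, ContDiffOn ℝ (⊤ : ℕ∞) (fun w => G w k l) D := by
    intro k l
    have : (fun w => G w k l) = fun w => ∑ i, V w i k * V w i l := by
      funext w; simp [hGdef, Matrix.mul_apply]
    rw [this]
    exact ContDiffOn.sum fun i _ => (hVsm i k).mul (hVsm i l)
  -- continuity of det G on D
  have hdetcont : ContinuousOn (fun w => (G w).det) D := by
    have hGcont : ContinuousOn G D := by
      exact continuousOn_pi.2 fun k => continuousOn_pi.2 fun l => (hGsm k l).continuousOn
    exact (continuous_id.matrix_det).comp_continuousOn hGcont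
  -- det G w₀ ≠ 0
  have hdet0 : (G w₀).det ≠ 0 := by
    intro h0
    obtain ⟨v, hv0, hv⟩ := (Matrix.exists_mulVec_eq_zero_iff).2 h0
    have hVv : V w₀ *ᵥ v = 0 := by
      have h2 : v ⬝ᵥ (G w₀ *ᵥ v) = (V w₀ *ᵥ v) ⬝ᵥ (V w₀ *ᵥ v) := by
        rw [hGdef]
        rw [← Matrix.mulVec_mulVec, Matrix.dotProduct_mulVec, Matrix.vecMul_transpose]
      rw [hv, dotProduct_zero] at h2
      exact (dotProduct_self_eq_zero).1 h2.symm
    have hinj : Function.Injective ((V w₀).mulVec) := by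
      rw [Matrix.mulVec_injective_iff]
      have : (fun k => (V w₀)ᵀ k) = fun k => (A w₀)ᵀ (c k) := funext (hVcolsA w₀)
      show LinearIndependent ℝ (fun k => (V w₀)ᵀ k); rw [this]; exact hc
    exact hv0 (hinj (by rw [hVv, Matrix.mulVec_zero]))
  -- the neighbourhood D₀
  refine ⟨D ∩ (fun w => (G w).det) ⁻¹' {0}ᶜ,
    hdetcont.isOpen_inter_preimage hD isOpen_compl_singleton,
    ⟨hw₀, hdet0⟩, Set.inter_subset_left, ?_⟩
  set D₀ : Set (Vec N) := D ∩ (fun w => (G w).det) ⁻¹' {0}ᶜ with hD₀def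
  have hD₀D : D₀ ⊆ D := Set.inter_subset_left
  have hdetne : ∀ w ∈ D₀, (G w).det ≠ 0 := fun w hw => hw.2
  -- linear independence of columns of V on D₀
  have hkerV : ∀ w ∈ D₀, ∀ v, V w *ᵥ v = 0 → v = 0 := by
    intro w hw v hv
    have h1 : G w *ᵥ v = 0 := by
      rw [hGdef, ← Matrix.mulVec_mulVec, hv, Matrix.mulVec_zero]
    have h2 : (G w)⁻¹ *ᵥ (G w *ᵥ v) = v := by
      rw [Matrix.mulVec_mulVec, Matrix.nonsing_inv_mul _ (isUnit_iff_ne_zero.2 (hdetne w hw)),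
        Matrix.one_mulVec]
    rw [← h2, h1, Matrix.mulVec_zero]
  have hli : ∀ w ∈ D₀, LinearIndependent ℝ (fun k => (V w)ᵀ k) := by
    intro w hw
    show LinearIndependent ℝ (V w).col; rw [← Matrix.mulVec_injective_iff]
    intro x y hxy
    have : V w *ᵥ (x - y) = 0 := by
      rw [Matrix.mulVec_sub, hxy, sub_self]
    have := hkerV w hw _ this
    exact sub_eq_zero.1 this
  -- Euclidean column families
  set col : Vec N → Fin r → Vec m := fun w k => (WithLp.equiv 2 (Fin m → ℝ)).symm ((V w)ᵀ k)
    with hcoldef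
  have hliE : ∀ w ∈ D₀, LinearIndependent ℝ (col w) := by
    intro w hw
    have := (hli w hw).map' (WithLp.linearEquiv 2 ℝ (Fin m → ℝ)).symm.toLinearMap
      (LinearEquiv.ker _)
    exact this
  haveI : WellFoundedLT (Fin r) := Finite.to_wellFoundedLT
  set g : Vec N → Fin r → Vec m := fun w => InnerProductSpace.gramSchmidt ℝ (col w) with hgdef
  set u : Vec N → Fin r → Vec m := fun w => InnerProductSpace.gramSchmidtNormed ℝ (col w) with hudef
  set U : Vec N → Matrix (Fin m) (Fin r) ℝ := fun w => Matrix.of fun i k => u w k i with hUdef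
  set B : Vec N → Matrix (Fin r) (Fin n) ℝ := fun w => (U w)ᵀ * A w with hBdef
  -- orthonormality
  have horth : ∀ w ∈ D₀, Orthonormal ℝ (u w) := fun w hw =>
    InnerProductSpace.gramSchmidtNormed_orthonormal (𝕜 := ℝ) (hliE w hw)
  have hUtU : ∀ w ∈ D₀, (U w)ᵀ * U w = 1 := by
    intro w hw
    ext k l
    have h1 := orthonormal_iff_ite.1 (horth w hw) k l
    simp only [PiLp.inner_apply, RCLike.inner_apply, starRingEnd_apply, star_trivial] at h1
    simp only [Matrix.mul_apply, Matrix.transpose_apply, Matrix.one_apply, hUdef, Matrix.of_apply]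
    rw [← h1]; exact Finset.sum_congr rfl fun _ _ => mul_comm _ _
  -- column span of A is contained in span of u's
  have hspan : ∀ w ∈ D₀, ∀ j : Fin n,
      (WithLp.equiv 2 (Fin m → ℝ)).symm ((A w)ᵀ j) ∈ Submodule.span ℝ (Set.range (u w)) := by
    intro w hw j
    have hle : Submodule.span ℝ (Set.range (V w)ᵀ) ≤ Submodule.span ℝ (Set.range (A w)ᵀ) := by
      apply Submodule.span_mono
      rintro x ⟨k, rfl⟩
      exact ⟨c k, (hVcolsA w k).symm⟩
    have hfA : Module.finrank ℝ (Submodule.span ℝ (Set.range (A w)ᵀ)) = r := by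
      exact (Matrix.rank_eq_finrank_span_cols (A w)).symm.trans (hrank w (hD₀D hw))
    have hfV : Module.finrank ℝ (Submodule.span ℝ (Set.range (V w)ᵀ)) = r := by
      have := finrank_span_eq_card (hli w hw)
      simpa [Set.range] using this
    have heq : Submodule.span ℝ (Set.range (V w)ᵀ) = Submodule.span ℝ (Set.range (A w)ᵀ) :=
      Submodule.eq_of_le_of_finrank_eq hle (by rw [hfA, hfV])
    -- transfer through the linear equivalence
    set eL := (WithLp.linearEquiv 2 ℝ (Fin m → ℝ)).symm with heLdef
    have hmem : (A w)ᵀ j ∈ Submodule.span ℝ (Set.range (V w)ᵀ) := by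
      rw [heq]; exact Submodule.subset_span ⟨j, rfl⟩
    have hmem2 : eL ((A w)ᵀ j) ∈ Submodule.map eL.toLinearMap
        (Submodule.span ℝ (Set.range (V w)ᵀ)) := ⟨_, hmem, rfl⟩
    rw [Submodule.map_span] at hmem2
    have himg : eL.toLinearMap '' Set.range (V w)ᵀ = Set.range (col w) := by
      exact (Set.range_comp _ _).symm
    rw [himg] at hmem2
    have hspan2 : Submodule.span ℝ (Set.range (col w)) = Submodule.span ℝ (Set.range (u w)) := by
      rw [hudef, InnerProductSpace.span_gramSchmidtNormed_range, InnerProductSpace.span_gramSchmidt]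
    rw [hspan2] at hmem2
    exact hmem2
  -- factorisation
  have hfac : ∀ w ∈ D₀, A w = U w * B w := by
    intro w hw
    ext i j
    obtain ⟨l, hl⟩ := (Submodule.mem_span_range_iff_exists_fun ℝ).1 (hspan w hw j)
    have hcoef : ∀ k, l k = ∑ i', u w k i' * A w i' j := by
      intro k
      have h3 := (horth w hw).inner_right_fintype l k
      rw [hl] at h3
      simp only [PiLp.inner_apply, RCLike.inner_apply, starRingEnd_apply, star_trivial] at h3
      rw [← h3]
      refine Finset.sum_congr rfl fun i' _ => ?_
      exact mul_comm _ _
    have hx : A w i j = ∑ k, l k * u w k i := by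
      have h4 := congrArg (fun v : Vec m => (EuclideanSpace.proj i : Vec m →L[ℝ] ℝ) v) hl
      simp only [map_sum, _root_.map_smul, PiLp.proj_apply, smul_eq_mul] at h4
      exact h4.symm
    have hgoal : (U w * B w) i j = ∑ k, l k * u w k i := by
      rw [hBdef]
      simp only [Matrix.mul_apply, Matrix.transpose_apply, hUdef, Matrix.of_apply]
      refine Finset.sum_congr rfl fun k _ => ?_
      rw [hcoef k]; ring
    rw [hx, hgoal]
  -- smoothness of columns of V as Euclidean maps on D₀
  have hVD₀ : ∀ i k, ContDiffOn ℝ (⊤ : ℕ∞) (fun w => V w i k) D₀ := fun i k =>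
    (hVsm i k).mono hD₀D
  have hcolsm : ∀ k, ContDiffOn ℝ (⊤ : ℕ∞) (fun w => col w k) D₀ := by
    intro k
    rw [contDiffOn_euclidean]
    intro i
    exact hVD₀ i k
  -- smoothness of gram-Schmidt vectors by strong induction
  have hgsm : ∀ k : Fin r, ContDiffOn ℝ (⊤ : ℕ∞) (fun w => g w k) D₀ := by
    have main : ∀ kk : ℕ, ∀ k : Fin r, (k : ℕ) = kk → ContDiffOn ℝ (⊤ : ℕ∞) (fun w => g w k) D₀ := by
      intro kk
      induction kk using Nat.strong_induction_on with
      | _ kk ih =>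
        intro k hk
        have hrec : ∀ i : Fin r, i < k → ContDiffOn ℝ (⊤ : ℕ∞) (fun w => g w i) D₀ := by
          intro i hi
          exact ih (i : ℕ) (by rw [← hk]; exact Fin.lt_def.mp hi) i rfl
        have hgdef2 : ∀ w, g w k = col w k - ∑ i ∈ Finset.Iio k,
            ((inner ℝ (g w i) (col w k) : ℝ) / (inner ℝ (g w i) (g w i) : ℝ)) • g w i := by
          intro w
          have h5 := InnerProductSpace.gramSchmidt_def'' ℝ (col w) k
          simp only [RCLike.ofReal_real_eq_id, id_eq, ← real_inner_self_eq_norm_sq] at h5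
          simp only [hgdef]
          exact eq_sub_of_add_eq h5.symm
        rw [show (fun w => g w k) = fun w => col w k - ∑ i ∈ Finset.Iio k,
            ((inner ℝ (g w i) (col w k) : ℝ) / (inner ℝ (g w i) (g w i) : ℝ)) • g w i
          from funext hgdef2]
        apply ContDiffOn.sub (hcolsm k)
        apply ContDiffOn.sum
        intro i hi
        have hi' : i < k := Finset.mem_Iio.1 hi
        have hgi := hrec i hi'
        have hginner : ContDiffOn ℝ (⊤ : ℕ∞) (fun w => (inner ℝ (g w i) (g w i) : ℝ)) D₀ :=
          ContDiffOn.inner ℝ hgi hgi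
        have hnum : ContDiffOn ℝ (⊤ : ℕ∞) (fun w => (inner ℝ (g w i) (col w k) : ℝ)) D₀ :=
          ContDiffOn.inner ℝ hgi (hcolsm k)
        have hne : ∀ w ∈ D₀, (inner ℝ (g w i) (g w i) : ℝ) ≠ 0 := fun w hw =>
          inner_self_ne_zero.2 (InnerProductSpace.gramSchmidt_ne_zero i (hliE w hw))
        exact (hnum.div hginner hne).smul hgi
    exact fun k => main (k : ℕ) k rfl
  -- nonvanishing of g
  have hgne : ∀ w ∈ D₀, ∀ k, g w k ≠ 0 := fun w hw k => InnerProductSpace.gramSchmidt_ne_zero k (hliE w hw)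
  -- smoothness of u entries
  have husm : ∀ k i, ContDiffOn ℝ (⊤ : ℕ∞) (fun w => u w k i) D₀ := by
    intro k i
    have hgk := hgsm k
    have hinner : ContDiffOn ℝ (⊤ : ℕ∞) (fun w => (inner ℝ (g w k) (g w k) : ℝ)) D₀ :=
      ContDiffOn.inner ℝ hgk hgk
    have hinnerne : ∀ w ∈ D₀, (inner ℝ (g w k) (g w k) : ℝ) ≠ 0 := fun w hw =>
      inner_self_ne_zero.2 (hgne w hw k)
    have hnormsm : ContDiffOn ℝ (⊤ : ℕ∞) (fun w => ‖g w k‖) D₀ := by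
      have h8 : (fun w => ‖g w k‖) = fun w => Real.sqrt (inner ℝ (g w k) (g w k) : ℝ) := by
        funext w; rw [norm_eq_sqrt_real_inner]
      rw [h8]
      exact hinner.sqrt hinnerne
    have hnormne : ∀ w ∈ D₀, ‖g w k‖ ≠ 0 := fun w hw => norm_ne_zero_iff.2 (hgne w hw k)
    have heq : (fun w => u w k i) = fun w => (‖g w k‖)⁻¹ * g w k i := by
      funext w
      rw [hudef]
      show InnerProductSpace.gramSchmidtNormed ℝ (col w) k i = _
      rw [InnerProductSpace.gramSchmidtNormed]
      rfl
    rw [heq]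
    have hgki : ContDiffOn ℝ (⊤ : ℕ∞) (fun w => g w k i) D₀ := contDiffOn_euclidean.1 hgk i
    exact ((hnormsm.inv hnormne)).mul hgki
  -- conclude
  refine ⟨U, B, ?_, ?_, ?_⟩
  · intro i k
    exact husm k i
  · intro k j
    have : (fun w => B w k j) = fun w => ∑ i, u w k i * A w i j := by
      funext w
      simp [hBdef, Matrix.mul_apply, hUdef]
    rw [this]
    exact ContDiffOn.sum fun i _ => (husm k i).mul ((hA i j).mono hD₀D)
  · intro w hw
    have hU1 : (U w).rank = r := by
      have h9 := Matrix.rank_transpose_mul_self (U w)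
      rw [hUtU w hw, Matrix.rank_one] at h9
      rw [← h9, Fintype.card_fin]
    refine ⟨hU1, ?_, hUtU w hw, hfac w hw⟩
    have hle1 : (B w).rank ≤ r := by
      rw [hBdef]
      calc ((U w)ᵀ * A w).rank ≤ (A w).rank := Matrix.rank_mul_le_right _ _
        _ = r := hrank w (hD₀D hw)
    have hge1 : r ≤ (B w).rank := by
      have : (A w).rank ≤ (B w).rank := by
        rw [hfac w hw]
        exact Matrix.rank_mul_le_right _ _
      rw [hrank w (hD₀D hw)] at this
      exact this
    exact le_antisymm hle1 hge1

end
end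

section
/- Let D ⊂ ℝ^N be open, let r ∈ ℕ, and let A : D → ℝ^{m×n} be a matrix-valued function with C^∞ entries and constant rank, rank A(w) = r for every w ∈ D. Then the pointwise Moore–Penrose generalised inverse of A is C^∞ on D: there exists a matrix-valued function P : D → ℝ^{n×m} with C^∞ entries such that for every w ∈ D the matrix P(w) satisfies the four Penrose equations A(w)P(w)A(w) = A(w), P(w)A(w)P(w) = P(w), (A(w)P(w))ᵀ = A(w)P(w), and (P(w)A(w))ᵀ = P(w)A(w). -/
open Topology Matrix

noncomputable section

section Aux

open Polynomial Finset

/-- coeff of a product of degree-≤1 polynomials with smooth coefficients is smooth -/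
lemma contDiffOn_coeff_prod {N : ℕ} {D : Set (Vec N)} {ι : Type*} [DecidableEq ι]
    (s : Finset ι) (a : ι → ℝ) (g : ι → Vec N → ℝ)
    (hg : ∀ i, ContDiffOn ℝ (⊤ : ℕ∞) (g i) D) :
    ∀ k : ℕ, ContDiffOn ℝ (⊤ : ℕ∞)
      (fun w => (∏ i ∈ s, (C (a i) * X + C (g i w))).coeff k) D := by
  have key : ∀ (aa bb : ℝ) (Q : ℝ[X]) (k : ℕ),
      ((C aa * X + C bb) * Q).coeff k
        = aa * (if k = 0 then 0 else Q.coeff (k-1)) + bb * Q.coeff k := by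
    intro aa bb Q k
    rw [add_mul, coeff_add, mul_assoc, coeff_C_mul, coeff_C_mul]
    cases k with
    | zero => simp [Polynomial.mul_coeff_zero]
    | succ k => simp [Polynomial.coeff_X_mul]
  induction s using Finset.induction_on with
  | empty =>
      intro k
      simp only [Finset.prod_empty, Polynomial.coeff_one]
      exact contDiffOn_const
  | @insert j s hjs ih =>
      intro k
      have hexp : ∀ w, (∏ i ∈ insert j s, (C (a i) * X + C (g i w)))
          = (C (a j) * X + C (g j w)) * ∏ i ∈ s, (C (a i) * X + C (g i w)) :=
        fun w => Finset.prod_insert hjs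
      simp only [hexp, key]
      refine ContDiffOn.add (ContDiffOn.mul contDiffOn_const ?_) (ContDiffOn.mul (hg j) (ih k))
      by_cases hk : k = 0
      · simp only [hk, if_pos rfl]; exact contDiffOn_const
      · simp only [if_neg hk]; exact ih (k-1)

/-- coefficients of the characteristic polynomial of a smooth matrix field are smooth -/
lemma contDiffOn_charpoly_coeff {N m' : ℕ} {D : Set (Vec N)}
    (M : Vec N → Matrix (Fin m') (Fin m') ℝ)
    (hM : ∀ i j, ContDiffOn ℝ (⊤ : ℕ∞) (fun w => M w i j) D) (k : ℕ) :
    ContDiffOn ℝ (⊤ : ℕ∞) (fun w => (M w).charpoly.coeff k) D := by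
  classical
  have hrw : ∀ w, (M w).charpoly.coeff k = ∑ σ : Equiv.Perm (Fin m'),
      ((Equiv.Perm.sign σ : ℤ) : ℝ) *
        (∏ i, (C (if σ i = i then (1:ℝ) else 0) * X + C (-(M w (σ i) i)))).coeff k := by
    intro w
    rw [Matrix.charpoly, Matrix.det_apply, Polynomial.finset_sum_coeff]
    refine Finset.sum_congr rfl fun σ _ => ?_
    rw [Polynomial.coeff_smul]
    have hprod : (∏ i, charmatrix (M w) (σ i) i)
        = ∏ i, (C (if σ i = i then (1:ℝ) else 0) * X + C (-(M w (σ i) i))) := by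
      refine Finset.prod_congr rfl fun i _ => ?_
      by_cases h : σ i = i
      · rw [h, Matrix.charmatrix_apply_eq]
        simp [h, sub_eq_add_neg]
      · rw [Matrix.charmatrix_apply_ne _ _ _ h]
        simp [h]
    rw [hprod]
    simp [Units.smul_def, zsmul_eq_mul]
  simp only [hrw]
  exact ContDiffOn.sum fun σ _ => contDiffOn_const.mul
    (contDiffOn_coeff_prod _ _ _ (fun i => (hM (σ i) i).neg) k)

/-- characteristic polynomial is invariant under conjugation -/
lemma charpoly_conj {m' : ℕ} (U V M : Matrix (Fin m') (Fin m') ℝ)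
    (hUV : U * V = 1) : (U * M * V).charpoly = M.charpoly := by
  have hone : (U.map (C : ℝ →+* ℝ[X])) * (V.map C) = 1 := by
    rw [← Matrix.map_mul, hUV, Matrix.map_one _ (map_zero C) (map_one C)]
  have hsc : U.map (C : ℝ →+* ℝ[X]) * Matrix.scalar (Fin m') (X : ℝ[X]) * V.map C
      = Matrix.scalar (Fin m') (X : ℝ[X]) := by
    rw [(Matrix.scalar_commute (X : ℝ[X]) (fun r => Commute.all _ r) (U.map C)).eq.symm,
      mul_assoc, hone, mul_one]
  have hcm : charmatrix (U * M * V) = (U.map C) * charmatrix M * (V.map C) := by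
    unfold charmatrix
    simp only [RingHom.mapMatrix_apply]
    rw [mul_sub, sub_mul, hsc, ← Matrix.map_mul, ← Matrix.map_mul]
  rw [Matrix.charpoly, hcm, Matrix.det_mul, Matrix.det_mul, Matrix.charpoly]
  calc (U.map (C : ℝ →+* ℝ[X])).det * (charmatrix M).det * (V.map C).det
      = (charmatrix M).det * ((U.map C).det * (V.map C).det) := by ring
    _ = (charmatrix M).det := by rw [← Matrix.det_mul, hone, Matrix.det_one, mul_one]

/-- polynomial functional calculus for a conjugated diagonal matrix -/
lemma aeval_UDV {m' : ℕ} (U V : Matrix (Fin m') (Fin m') ℝ)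
    (hUV : U * V = 1) (hVU : V * U = 1) (μ : Fin m' → ℝ) (p : ℝ[X]) :
    Polynomial.aeval (U * diagonal μ * V) p
      = U * diagonal (fun i => p.eval (μ i)) * V := by
  have hassoc : ∀ (D1 D2 : Matrix (Fin m') (Fin m') ℝ),
      (U * D1 * V) * (U * D2 * V) = U * (D1 * D2) * V := by
    intro D1 D2
    simp only [mul_assoc]
    rw [← mul_assoc V U (D2 * V), hVU, one_mul]
  induction p using Polynomial.induction_on with
  | C a =>
    have hdiag : diagonal (fun _ : Fin m' => a) = a • (1 : Matrix (Fin m') (Fin m') ℝ) := by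
      ext i j
      by_cases h : i = j <;> simp [Matrix.diagonal_apply, Matrix.one_apply, h]
    simp only [aeval_C, eval_C]
    rw [hdiag, mul_smul_comm, mul_one, smul_mul_assoc, hUV, Algebra.algebraMap_eq_smul_one]
  | add p q hp hq =>
    have hd : diagonal (fun i => (p+q).eval (μ i))
        = diagonal (fun i => p.eval (μ i)) + diagonal (fun i => q.eval (μ i)) := by
      rw [Matrix.diagonal_add]
      congr 1; funext i; simp
    rw [map_add, hp, hq, hd, mul_add, add_mul]
  | monomial n a ih =>
    have h1 : (C a * X ^ (n+1) : ℝ[X]) = (C a * X ^ n) * X := by ring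
    rw [h1, _root_.map_mul, ih, aeval_X, hassoc, Matrix.diagonal_mul_diagonal]
    congr 2
    funext i
    simp [pow_succ]

/-- the auxiliary matrix `T` built from charpoly coefficients of `A * Aᵀ` -/
def Tmat {m n : ℕ} (r : ℕ) (A : Matrix (Fin m) (Fin n) ℝ) : Matrix (Fin m) (Fin m) ℝ :=
  ∑ k ∈ Finset.range r, (A * Aᵀ).charpoly.coeff (m - r + (k + 1)) • (A * Aᵀ) ^ k

/-- the key scalar: the lowest (possibly) nonvanishing charpoly coefficient of `A * Aᵀ` -/
def cval {m n : ℕ} (r : ℕ) (A : Matrix (Fin m) (Fin n) ℝ) : ℝ :=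
  (A * Aᵀ).charpoly.coeff (m - r)

/-- key identity: if `A` has rank `r`, then `cval r A ≠ 0` and
`(A Aᵀ) T A = -(cval r A) • A`. -/
lemma key_lemma {m n r : ℕ} (A : Matrix (Fin m) (Fin n) ℝ) (hr : A.rank = r) :
    cval r A ≠ 0 ∧ (A * Aᵀ) * Tmat r A * A = (-(cval r A)) • A := by
  classical
  set B : Matrix (Fin m) (Fin m) ℝ := A * Aᵀ with hBdef
  have hBher : B.IsHermitian := by
    rw [Matrix.IsHermitian, Matrix.conjTranspose_eq_transpose_of_trivial, hBdef,
      Matrix.transpose_mul, Matrix.transpose_transpose]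
  set μ : Fin m → ℝ := hBher.eigenvalues with hμdef
  set Umat : Matrix (Fin m) (Fin m) ℝ := (hBher.eigenvectorUnitary : Matrix (Fin m) (Fin m) ℝ)
    with hUdef
  have hUV : Umat * star Umat = 1 := (Matrix.mem_unitaryGroup_iff).mp hBher.eigenvectorUnitary.2
  have hVU : star Umat * Umat = 1 := (Matrix.mem_unitaryGroup_iff').mp hBher.eigenvectorUnitary.2
  have hspec : B = Umat * diagonal μ * star Umat := by
    have h := hBher.spectral_theorem
    have hfix : (RCLike.ofReal ∘ μ : Fin m → ℝ) = μ := by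
      funext i; simp [RCLike.ofReal]
    rw [hfix] at h
    exact h
  have hpsd : B.PosSemidef := by
    have h := Matrix.posSemidef_self_mul_conjTranspose A
    rwa [Matrix.conjTranspose_eq_transpose_of_trivial, ← hBdef] at h
  have hμnn : ∀ i, 0 ≤ μ i := fun i => hpsd.eigenvalues_nonneg i
  have hrk : B.rank = r := by rw [hBdef, Matrix.rank_self_mul_transpose, hr]
  have hcard : (Finset.univ.filter fun i => μ i ≠ 0).card = r := by
    have h := hBher.rank_eq_card_non_zero_eigs
    rw [hrk, Fintype.card_subtype] at h
    exact h.symm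
  set s₀ : Finset (Fin m) := Finset.univ.filter fun i => μ i ≠ 0 with hs₀
  set g : ℝ[X] := ∏ i ∈ s₀, (X - C (μ i)) with hgdef
  have hrm : r ≤ m := by
    rw [← hcard]
    exact (Finset.card_filter_le _ _).trans (by simp)
  have hchar : B.charpoly = g * X ^ (m - r) := by
    have h1 : B.charpoly = (diagonal μ).charpoly := by
      conv_lhs => rw [hspec]
      exact charpoly_conj Umat (star Umat) _ hUV
    have h2 : (diagonal μ).charpoly = ∏ i, (X - C (μ i)) := by
      rw [Matrix.charpoly_of_upperTriangular _ (Matrix.blockTriangular_diagonal μ)]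
      simp
    have h3 : (∏ i, (X - C (μ i)))
        = (∏ i ∈ s₀, (X - C (μ i))) *
          ∏ i ∈ Finset.univ.filter (fun i => ¬ μ i ≠ 0), (X - C (μ i)) :=
      (Finset.prod_filter_mul_prod_filter_not Finset.univ _ _).symm
    have h4 : ∏ i ∈ Finset.univ.filter (fun i => ¬ μ i ≠ 0), (X - C (μ i))
        = (X : ℝ[X]) ^ (m - r) := by
      have hz : ∀ i ∈ Finset.univ.filter (fun i => ¬ μ i ≠ 0), X - C (μ i) = (X : ℝ[X]) := by
        intro i hi
        have : μ i = 0 := not_not.mp (Finset.mem_filter.mp hi).2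
        simp [this]
      rw [Finset.prod_congr rfl hz, Finset.prod_const]
      congr 1
      have h5 := Finset.card_filter_add_card_filter_not
        (s := Finset.univ) (p := fun i : Fin m => μ i ≠ 0)
      simp only [Finset.card_univ, Fintype.card_fin] at h5
      have hc' : (Finset.univ.filter fun i => μ i ≠ 0).card = r := hcard
      omega
    rw [h1, h2, h3, h4, ← hgdef]
  have hcoeff : ∀ k, B.charpoly.coeff (m - r + k) = g.coeff k := by
    intro k
    rw [hchar, add_comm, Polynomial.coeff_mul_X_pow]
  have hc0ne : cval r A ≠ 0 := by
    show B.charpoly.coeff (m - r + 0) ≠ 0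
    rw [hcoeff 0, Polynomial.coeff_zero_eq_eval_zero, hgdef, Polynomial.eval_prod]
    rw [Finset.prod_ne_zero_iff]
    intro i hi
    have hne := (Finset.mem_filter.mp hi).2
    simpa using hne
  have hgnat : g.natDegree < r + 1 := by
    refine Nat.lt_succ_of_le ((Polynomial.natDegree_prod_le _ _).trans (le_of_eq ?_))
    calc (∑ i ∈ s₀, (X - C (μ i)).natDegree) = ∑ _i ∈ s₀, 1 := by
          refine Finset.sum_congr rfl fun i _ => ?_
          exact Polynomial.natDegree_X_sub_C _
      _ = r := by rw [Finset.sum_const, smul_eq_mul, mul_one, hcard]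
  set Gm : Matrix (Fin m) (Fin m) ℝ := Polynomial.aeval B g with hGm
  have hGsum : Gm = ∑ k ∈ Finset.range (r+1), g.coeff k • B ^ k := by
    rw [hGm]
    conv_lhs => rw [Polynomial.as_sum_range' g (r+1) hgnat]
    rw [map_sum]
    refine Finset.sum_congr rfl fun k _ => ?_
    rw [Polynomial.aeval_monomial, ← Algebra.smul_def]
  have hdecomp : Gm = cval r A • 1 + B * Tmat r A := by
    rw [hGsum, Finset.sum_range_succ']
    rw [add_comm]
    congr 1
    · rw [pow_zero]
      show g.coeff 0 • (1 : Matrix (Fin m) (Fin m) ℝ) = B.charpoly.coeff (m - r + 0) • 1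
      rw [hcoeff 0]
    · show (∑ k ∈ Finset.range r, g.coeff (k+1) • B ^ (k+1)) = B * Tmat r A
      rw [Tmat, ← hBdef, Finset.mul_sum]
      refine Finset.sum_congr rfl fun k _ => ?_
      rw [hcoeff (k+1), mul_smul_comm, ← pow_succ']
  have haev : ∀ p : ℝ[X],
      Polynomial.aeval B p = Umat * diagonal (fun i => p.eval (μ i)) * star Umat := by
    intro p
    rw [hspec]
    exact aeval_UDV _ _ hUV hVU μ p
  have hXg : B * Gm = 0 := by
    have h1 : B * Gm = Polynomial.aeval B (X * g) := by
      rw [_root_.map_mul, aeval_X, hGm]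
    rw [h1, haev]
    have h2 : (fun i => (X * g).eval (μ i)) = fun _ => (0:ℝ) := by
      funext i
      rw [Polynomial.eval_mul, Polynomial.eval_X]
      by_cases h : μ i = 0
      · rw [h, zero_mul]
      · have hi : i ∈ s₀ := Finset.mem_filter.mpr ⟨Finset.mem_univ _, h⟩
        have : g.eval (μ i) = 0 := by
          rw [hgdef, Polynomial.eval_prod]
          exact Finset.prod_eq_zero hi (by simp)
        rw [this, mul_zero]
    rw [h2, Matrix.diagonal_zero, Matrix.mul_zero, Matrix.zero_mul]
  have hGB : Gm * B = 0 := by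
    calc Gm * B = Polynomial.aeval B (g * X) := by rw [_root_.map_mul, aeval_X, hGm]
      _ = Polynomial.aeval B (X * g) := by rw [mul_comm]
      _ = B * Gm := by rw [_root_.map_mul, aeval_X, hGm]
      _ = 0 := hXg
  have hBsym : Bᵀ = B := by rw [hBdef, Matrix.transpose_mul, Matrix.transpose_transpose]
  have hGsymm : Gmᵀ = Gm := by
    rw [hGsum, Matrix.transpose_sum]
    refine Finset.sum_congr rfl fun k _ => ?_
    rw [Matrix.transpose_smul, Matrix.transpose_pow, hBsym]
  have hGA : Gm * A = 0 := by
    have h2 : (Gm * A) * (Gm * A)ᴴ = 0 := by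
      rw [Matrix.conjTranspose_eq_transpose_of_trivial, Matrix.transpose_mul, hGsymm]
      calc Gm * A * (Aᵀ * Gm) = Gm * (A * Aᵀ) * Gm := by
            rw [Matrix.mul_assoc Gm A (Aᵀ * Gm), ← Matrix.mul_assoc A Aᵀ Gm, ← Matrix.mul_assoc]
        _ = (Gm * B) * Gm := by rw [← hBdef]
        _ = 0 := by rw [hGB, Matrix.zero_mul]
    exact Matrix.self_mul_conjTranspose_eq_zero.mp h2
  refine ⟨hc0ne, ?_⟩
  have h3 : (cval r A • 1 + B * Tmat r A) * A = 0 := by rw [← hdecomp]; exact hGA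
  rw [Matrix.add_mul, Matrix.smul_mul, Matrix.one_mul] at h3
  have h4 : B * Tmat r A * A = -(cval r A • A) := by
    rw [Matrix.mul_assoc] at h3 ⊢
    exact eq_neg_of_add_eq_zero_right h3
  rw [h4, neg_smul]

lemma Tmat_transpose {m n : ℕ} (r : ℕ) (A : Matrix (Fin m) (Fin n) ℝ) :
    (Tmat r A)ᵀ = Tmat r A := by
  have hBsym : (A * Aᵀ)ᵀ = A * Aᵀ := by
    rw [Matrix.transpose_mul, Matrix.transpose_transpose]
  rw [Tmat, Matrix.transpose_sum]
  refine Finset.sum_congr rfl fun k _ => ?_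
  rw [Matrix.transpose_smul, Matrix.transpose_pow, hBsym]

lemma Tmat_comm {m n : ℕ} (r : ℕ) (A : Matrix (Fin m) (Fin n) ℝ) :
    Tmat r A * (A * Aᵀ) = (A * Aᵀ) * Tmat r A := by
  rw [Tmat, Finset.sum_mul, Finset.mul_sum]
  refine Finset.sum_congr rfl fun k _ => ?_
  rw [Matrix.smul_mul, Matrix.mul_smul, ← pow_succ, ← pow_succ']

/-- the Penrose equations for the explicit formula -/
lemma penrose {m n r : ℕ} (A : Matrix (Fin m) (Fin n) ℝ) (hr : A.rank = r) :
    A * ((-(cval r A)⁻¹) • (Aᵀ * Tmat r A)) * A = A ∧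
    ((-(cval r A)⁻¹) • (Aᵀ * Tmat r A)) * A * ((-(cval r A)⁻¹) • (Aᵀ * Tmat r A))
      = (-(cval r A)⁻¹) • (Aᵀ * Tmat r A) ∧
    (A * ((-(cval r A)⁻¹) • (Aᵀ * Tmat r A)))ᵀ = A * ((-(cval r A)⁻¹) • (Aᵀ * Tmat r A)) ∧
    (((-(cval r A)⁻¹) • (Aᵀ * Tmat r A)) * A)ᵀ = ((-(cval r A)⁻¹) • (Aᵀ * Tmat r A)) * A := by
  obtain ⟨hc, hkey⟩ := key_lemma A hr
  set c : ℝ := cval r A with hcdef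
  set T : Matrix (Fin m) (Fin m) ℝ := Tmat r A with hTdef
  set s : ℝ := -(c⁻¹) with hsdef
  have hTt : Tᵀ = T := Tmat_transpose r A
  have hTB : T * (A * Aᵀ) = (A * Aᵀ) * T := Tmat_comm r A
  have hkeyT : Aᵀ * (T * (A * Aᵀ)) = (-c) • Aᵀ := by
    have := congrArg Matrix.transpose hkey
    rwa [Matrix.transpose_smul, Matrix.transpose_mul, Matrix.transpose_mul,
      Matrix.transpose_mul, Matrix.transpose_transpose, hTt] at this
  have hsc : s * (-c) = 1 := by
    rw [hsdef]; field_simp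
  refine ⟨?_, ?_, ?_, ?_⟩
  · rw [Matrix.mul_smul, Matrix.smul_mul, ← Matrix.mul_assoc A Aᵀ T, hkey, smul_smul, hsc,
      one_smul]
  · rw [Matrix.smul_mul, Matrix.smul_mul, Matrix.mul_smul, smul_smul]
    have hX : Aᵀ * T * A * (Aᵀ * T) = (-c) • (Aᵀ * T) := by
      rw [← Matrix.mul_assoc (Aᵀ * T * A) Aᵀ T, Matrix.mul_assoc (Aᵀ * T) A Aᵀ,
        Matrix.mul_assoc Aᵀ T (A * Aᵀ), hkeyT, Matrix.smul_mul]
    rw [hX, smul_smul]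
    congr 1
    rw [mul_assoc, hsc, mul_one]
  · rw [Matrix.mul_smul, Matrix.transpose_smul, Matrix.transpose_mul, Matrix.transpose_mul,
      Matrix.transpose_transpose, hTt, Matrix.mul_assoc T A Aᵀ, hTB, Matrix.mul_assoc]
  · rw [Matrix.smul_mul, Matrix.transpose_smul, Matrix.transpose_mul, Matrix.transpose_mul,
      Matrix.transpose_transpose, hTt, ← Matrix.mul_assoc]

end Aux

/-- Theorem (smoothness of the Moore–Penrose inverse): the pointwise Moore–Penrose
generalised inverse of a C^∞ constant-rank matrix field is C^∞. -/
theorem smooth_moore_penrose_inverse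
    {N m n : ℕ} (hN : 0 < N) (hm : 0 < m) (hn : 0 < n) (r : ℕ)
    (D : Set (Vec N)) (hD : IsOpen D)
    (A : Vec N → Matrix (Fin m) (Fin n) ℝ)
    (hA : ∀ i j, ContDiffOn ℝ (⊤ : ℕ∞) (fun w => A w i j) D)
    (hrank : ∀ w ∈ D, (A w).rank = r) :
    ∃ P : Vec N → Matrix (Fin n) (Fin m) ℝ,
      (∀ i j, ContDiffOn ℝ (⊤ : ℕ∞) (fun w => P w i j) D) ∧
      ∀ w ∈ D,
        A w * P w * A w = A w ∧
        P w * A w * P w = P w ∧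
        (A w * P w)ᵀ = A w * P w ∧
        (P w * A w)ᵀ = P w * A w := by
  classical
  refine ⟨fun w => (-(cval r (A w))⁻¹) • ((A w)ᵀ * Tmat r (A w)), ?_, ?_⟩
  · intro i j
    have hBsm : ∀ i j, ContDiffOn ℝ (⊤ : ℕ∞) (fun w => (A w * (A w)ᵀ) i j) D := by
      intro i j
      have hfun : (fun w => (A w * (A w)ᵀ) i j) = fun w => ∑ k, A w i k * A w j k := by
        funext w; simp [Matrix.mul_apply]
      rw [hfun]
      exact ContDiffOn.sum fun k _ => (hA i k).mul (hA j k)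
    have hcoef : ∀ d, ContDiffOn ℝ (⊤ : ℕ∞) (fun w => (A w * (A w)ᵀ).charpoly.coeff d) D :=
      fun d => contDiffOn_charpoly_coeff _ hBsm d
    have hpow : ∀ (l : ℕ) (i j : Fin m),
        ContDiffOn ℝ (⊤ : ℕ∞) (fun w => ((A w * (A w)ᵀ) ^ l) i j) D := by
      intro l
      induction l with
      | zero =>
          intro i j
          simp only [pow_zero]
          exact contDiffOn_const
      | succ l ih =>
          intro i j
          have hfun : (fun w => ((A w * (A w)ᵀ) ^ (l+1)) i j)
              = fun w => ∑ k, ((A w * (A w)ᵀ) ^ l) i k * (A w * (A w)ᵀ) k j := by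
            funext w; rw [pow_succ, Matrix.mul_apply]
          rw [hfun]
          exact ContDiffOn.sum fun k _ => (ih i k).mul (hBsm k j)
    have hTsm : ∀ i j, ContDiffOn ℝ (⊤ : ℕ∞) (fun w => Tmat r (A w) i j) D := by
      intro i j
      have hfun : (fun w => Tmat r (A w) i j)
          = fun w => ∑ k ∈ Finset.range r,
              (A w * (A w)ᵀ).charpoly.coeff (m - r + (k+1)) * ((A w * (A w)ᵀ) ^ k) i j := by
        funext w
        rw [Tmat, Matrix.sum_apply]
        refine Finset.sum_congr rfl fun k _ => ?_
        rw [Matrix.smul_apply, smul_eq_mul]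
      rw [hfun]
      exact ContDiffOn.sum fun k _ => (hcoef _).mul (hpow k i j)
    have hcne : ∀ w ∈ D, cval r (A w) ≠ 0 := fun w hw => (key_lemma (A w) (hrank w hw)).1
    have hfun : (fun w => ((-(cval r (A w))⁻¹) • ((A w)ᵀ * Tmat r (A w))) i j)
        = fun w => (-(cval r (A w))⁻¹) * ∑ k, A w k i * Tmat r (A w) k j := by
      funext w
      rw [Matrix.smul_apply, smul_eq_mul, Matrix.mul_apply]
      simp [Matrix.transpose_apply]
    rw [hfun]
    refine ContDiffOn.mul (ContDiffOn.neg (ContDiffOn.inv (hcoef _) hcne)) ?_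
    exact ContDiffOn.sum fun k _ => (hA k i).mul (hTsm k j)
  · intro w hw
    exact penrose (A w) (hrank w hw)

end
end

section
/- Let D ⊂ ℝ^N be open, let r ∈ ℕ, and let A : D → ℝ^{m×n} be a matrix-valued function with C^∞ entries and constant rank, rank A(w) = r for every w ∈ D. Then the family of orthogonal projections onto the kernels of A(w) depends smoothly on w: there exists a matrix-valued function Π : D → ℝ^{n×n} with C^∞ entries such that for every w ∈ D, Π(w)ᵀ = Π(w), Π(w)² = Π(w), A(w)Π(w) = 0, and Π(w)v = v for every v ∈ ker A(w) (i.e. Π(w) is the matrix of the orthogonal projection of ℝ^n onto ker A(w)). -/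
open Topology Matrix

noncomputable section

variable {E : Type*} [NormedAddCommGroup E] [NormedSpace ℝ E]

lemma cdo_prod {ι : Type*} {s : Finset ι} {f : ι → E → ℝ} {t : Set E}
    (h : ∀ i ∈ s, ContDiffOn ℝ (⊤ : ℕ∞) (f i) t) :
    ContDiffOn ℝ (⊤ : ℕ∞) (fun x => ∏ i ∈ s, f i x) t := by
  classical
  induction s using Finset.induction_on with
  | empty => simpa using contDiffOn_const
  | insert _ _ hx ih =>
      simp only [Finset.prod_insert hx]
      exact (h _ (Finset.mem_insert_self _ _)).mul
        (ih fun i hi => h i (Finset.mem_insert_of_mem hi))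

lemma cdo_det {k : ℕ} {M : E → Matrix (Fin k) (Fin k) ℝ} {t : Set E}
    (h : ∀ i j, ContDiffOn ℝ (⊤ : ℕ∞) (fun w => M w i j) t) :
    ContDiffOn ℝ (⊤ : ℕ∞) (fun w => (M w).det) t := by
  simp only [Matrix.det_apply']
  exact ContDiffOn.sum fun σ _ => contDiffOn_const.mul (cdo_prod fun i _ => h _ _)

lemma cdo_adjugate {k : ℕ} {M : E → Matrix (Fin k) (Fin k) ℝ} {t : Set E}
    (h : ∀ i j, ContDiffOn ℝ (⊤ : ℕ∞) (fun w => M w i j) t) (i j : Fin k) :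
    ContDiffOn ℝ (⊤ : ℕ∞) (fun w => (M w).adjugate i j) t := by
  simp only [Matrix.adjugate_apply]
  apply cdo_det
  intro a b
  rcases eq_or_ne a j with rfl | haj
  · simpa [Matrix.updateRow_apply] using contDiffOn_const
  · simpa [Matrix.updateRow_apply, haj] using h a b

lemma cdo_inv {k : ℕ} {M : E → Matrix (Fin k) (Fin k) ℝ} {t : Set E}
    (h : ∀ i j, ContDiffOn ℝ (⊤ : ℕ∞) (fun w => M w i j) t)
    (hdet : ∀ w ∈ t, (M w).det ≠ 0) (i j : Fin k) :
    ContDiffOn ℝ (⊤ : ℕ∞) (fun w => (M w)⁻¹ i j) t := by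
  simp only [Matrix.inv_def, Ring.inverse_eq_inv', Matrix.smul_apply, smul_eq_mul]
  exact ((cdo_det h).inv hdet).mul (cdo_adjugate h i j)

lemma cdo_mul {a b c : ℕ} {M : E → Matrix (Fin a) (Fin b) ℝ} {P : E → Matrix (Fin b) (Fin c) ℝ}
    {t : Set E}
    (hM : ∀ i j, ContDiffOn ℝ (⊤ : ℕ∞) (fun w => M w i j) t)
    (hP : ∀ i j, ContDiffOn ℝ (⊤ : ℕ∞) (fun w => P w i j) t) (i : Fin a) (j : Fin c) :
    ContDiffOn ℝ (⊤ : ℕ∞) (fun w => (M w * P w) i j) t := by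
  simp only [Matrix.mul_apply]
  exact ContDiffOn.sum fun k _ => (hM i k).mul (hP k j)

lemma ext_mulVec {a b : ℕ} {M P : Matrix (Fin a) (Fin b) ℝ}
    (h : ∀ v, M *ᵥ v = P *ᵥ v) : M = P := by
  ext i j
  have := congrFun (h (Pi.single j 1)) i
  simpa [Matrix.mulVec_single] using this

def KerProj {m n : ℕ} (A : Matrix (Fin m) (Fin n) ℝ) (P : Matrix (Fin n) (Fin n) ℝ) : Prop :=
  Pᵀ = P ∧ A * P = 0 ∧ ∀ v, A *ᵥ v = 0 → P *ᵥ v = v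

lemma kerProj_idem {m n : ℕ} {A : Matrix (Fin m) (Fin n) ℝ} {P : Matrix (Fin n) (Fin n) ℝ}
    (h : KerProj A P) : P * P = P := by
  refine ext_mulVec fun v => ?_
  rw [← Matrix.mulVec_mulVec]
  exact h.2.2 _ (by rw [Matrix.mulVec_mulVec, h.2.1, Matrix.zero_mulVec])

lemma kerProj_unique {m n : ℕ} {A : Matrix (Fin m) (Fin n) ℝ} {P Q : Matrix (Fin n) (Fin n) ℝ}
    (hP : KerProj A P) (hQ : KerProj A Q) : P = Q := by
  have h1 : Q * P = P := ext_mulVec fun v => by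
    rw [← Matrix.mulVec_mulVec]
    exact hQ.2.2 _ (by rw [Matrix.mulVec_mulVec, hP.2.1, Matrix.zero_mulVec])
  have h2 : P * Q = Q := ext_mulVec fun v => by
    rw [← Matrix.mulVec_mulVec]
    exact hP.2.2 _ (by rw [Matrix.mulVec_mulVec, hQ.2.1, Matrix.zero_mulVec])
  have h3 := congrArg Matrix.transpose h1
  rw [Matrix.transpose_mul, hP.1, hQ.1, h2] at h3
  exact h3.symm

lemma det_ne_of_rank {r : ℕ} {G : Matrix (Fin r) (Fin r) ℝ} (h : G.rank = r) : G.det ≠ 0 := by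
  have htop : LinearMap.range G.mulVecLin = ⊤ := by
    apply Submodule.eq_top_of_finrank_eq
    rw [show Module.finrank ℝ ↥(LinearMap.range G.mulVecLin) = G.rank from rfl, h,
      Module.finrank_fintype_fun_eq_card, Fintype.card_fin]
  have hs : Function.Surjective G.mulVec := by
    intro y
    have : y ∈ LinearMap.range G.mulVecLin := htop ▸ Submodule.mem_top
    obtain ⟨x, hx⟩ := this
    exact ⟨x, hx⟩
  have hu := Matrix.mulVec_surjective_iff_isUnit.mp hs
  simpa [isUnit_iff_ne_zero] using (Matrix.isUnit_iff_isUnit_det _).mp hu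

lemma ker_subset {m n r : ℕ} {A : Matrix (Fin m) (Fin n) ℝ} {B : Matrix (Fin r) (Fin n) ℝ}
    (hAB : ∀ v, A *ᵥ v = 0 → B *ᵥ v = 0) (hA : A.rank = r) (hB : B.rank = r)
    {v : Fin n → ℝ} (hv : B *ᵥ v = 0) : A *ᵥ v = 0 := by
  have hle : LinearMap.ker A.mulVecLin ≤ LinearMap.ker B.mulVecLin := by
    intro x hx
    exact LinearMap.mem_ker.mpr (hAB x (LinearMap.mem_ker.mp hx))
  have hA' := LinearMap.finrank_range_add_finrank_ker A.mulVecLin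
  have hB' := LinearMap.finrank_range_add_finrank_ker B.mulVecLin
  rw [Module.finrank_fintype_fun_eq_card, Fintype.card_fin] at hA' hB'
  have hrA : Module.finrank ℝ ↥(LinearMap.range A.mulVecLin) = r := hA
  have hrB : Module.finrank ℝ ↥(LinearMap.range B.mulVecLin) = r := hB
  have heq : LinearMap.ker A.mulVecLin = LinearMap.ker B.mulVecLin :=
    Submodule.eq_of_le_of_finrank_le hle (by omega)
  have : v ∈ LinearMap.ker B.mulVecLin := LinearMap.mem_ker.mpr hv
  rw [← heq] at this
  exact LinearMap.mem_ker.mp this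

lemma kerProj_formula {m n r : ℕ} {A : Matrix (Fin m) (Fin n) ℝ} {B : Matrix (Fin r) (Fin n) ℝ}
    (hdet : IsUnit (B * Bᵀ).det)
    (hker : ∀ v, A *ᵥ v = 0 ↔ B *ᵥ v = 0) :
    KerProj A (1 - Bᵀ * (B * Bᵀ)⁻¹ * B) := by
  have hBQ : B * (1 - Bᵀ * (B * Bᵀ)⁻¹ * B) = 0 := by
    rw [Matrix.mul_sub, Matrix.mul_one, ← Matrix.mul_assoc, ← Matrix.mul_assoc,
      Matrix.mul_nonsing_inv _ hdet, Matrix.one_mul, sub_self]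
  refine ⟨?_, ?_, ?_⟩
  · rw [Matrix.transpose_sub, Matrix.transpose_one, Matrix.transpose_mul, Matrix.transpose_mul,
      Matrix.transpose_transpose, Matrix.transpose_nonsing_inv, Matrix.transpose_mul,
      Matrix.transpose_transpose, Matrix.mul_assoc]
  · refine ext_mulVec fun v => ?_
    rw [Matrix.zero_mulVec, ← Matrix.mulVec_mulVec]
    exact (hker _).mpr (by rw [Matrix.mulVec_mulVec, hBQ, Matrix.zero_mulVec])
  · intro v hv
    have hBv : B *ᵥ v = 0 := (hker v).mp hv
    rw [Matrix.sub_mulVec, Matrix.one_mulVec, Matrix.mul_assoc, ← Matrix.mulVec_mulVec,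
      ← Matrix.mulVec_mulVec, hBv, Matrix.mulVec_zero, Matrix.mulVec_zero, sub_zero]

lemma exists_rows {m n r : ℕ} (A : Matrix (Fin m) (Fin n) ℝ) (h : A.rank = r) :
    ∃ ρ : Fin r → Fin m, (A.submatrix ρ id).rank = r := by
  classical
  obtain ⟨b, hb, hspan, hli⟩ := exists_linearIndependent ℝ (Set.range A)
  have hbfin : b.Finite := (Set.finite_range A).subset hb
  haveI : Fintype b := hbfin.fintype
  have hcard : Fintype.card b = r := by
    have h1 := finrank_span_set_eq_card hli
    rw [hspan, show Set.range (A : Fin m → Fin n → ℝ) = Set.range A.row from rfl,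
      ← Matrix.rank_eq_finrank_span_row, h, Set.toFinset_card] at h1
    exact h1.symm
  let e : Fin r ≃ b := (Fintype.equivFinOfCardEq hcard).symm
  have hmem : ∀ k : Fin r, ((e k : Fin n → ℝ)) ∈ Set.range A := fun k => hb (e k).2
  choose ρ hρ using hmem
  refine ⟨ρ, ?_⟩
  have heq : (A.submatrix ρ id : Fin r → Fin n → ℝ) = fun k => ((e k : Fin n → ℝ)) := by
    funext k j
    simp [Matrix.submatrix_apply, hρ k]
  have hli2 : LinearIndependent ℝ (A.submatrix ρ id : Fin r → Fin n → ℝ) := by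
    rw [heq]
    exact hli.comp e (e.injective)
  rw [LinearIndependent.rank_matrix (M := A.submatrix ρ id) hli2, Fintype.card_fin]

/-- Theorem (smoothness of the kernel projections): for a C^∞ constant-rank matrix field A,
the orthogonal projections of ℝⁿ onto ker A(w) depend smoothly on w. -/
theorem smooth_kernel_projection
    {N m n : ℕ} (hN : 0 < N) (hm : 0 < m) (hn : 0 < n) (r : ℕ)
    (D : Set (Vec N)) (hD : IsOpen D)
    (A : Vec N → Matrix (Fin m) (Fin n) ℝ)
    (hA : ∀ i j, ContDiffOn ℝ (⊤ : ℕ∞) (fun w => A w i j) D)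
    (hrank : ∀ w ∈ D, (A w).rank = r) :
    ∃ Pr : Vec N → Matrix (Fin n) (Fin n) ℝ,
      (∀ i j, ContDiffOn ℝ (⊤ : ℕ∞) (fun w => Pr w i j) D) ∧
      ∀ w ∈ D,
        (Pr w)ᵀ = Pr w ∧
        Pr w * Pr w = Pr w ∧
        A w * Pr w = 0 ∧
        ∀ v : Fin n → ℝ, A w *ᵥ v = 0 → Pr w *ᵥ v = v := by
  classical
  have key : ∀ w0 ∈ D, ∃ U : Set (Vec N), IsOpen U ∧ w0 ∈ U ∧ U ⊆ D ∧
      ∃ Q : Vec N → Matrix (Fin n) (Fin n) ℝ,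
        (∀ i j, ContDiffOn ℝ (⊤ : ℕ∞) (fun w => Q w i j) U) ∧
        ∀ w ∈ U, KerProj (A w) (Q w) := by
    intro w0 hw0
    obtain ⟨ρ, hρ⟩ := exists_rows (A w0) (hrank w0 hw0)
    set B : Vec N → Matrix (Fin r) (Fin n) ℝ := fun w => (A w).submatrix ρ id with hBdef
    have hBsm : ∀ i j, ContDiffOn ℝ (⊤ : ℕ∞) (fun w => B w i j) D := fun i j => hA (ρ i) j
    set G : Vec N → Matrix (Fin r) (Fin r) ℝ := fun w => B w * (B w)ᵀ with hGdef
    have hBtsm : ∀ i j, ContDiffOn ℝ (⊤ : ℕ∞) (fun w => (B w)ᵀ i j) D := fun i j => hBsm j i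
    have hGsm : ∀ i j, ContDiffOn ℝ (⊤ : ℕ∞) (fun w => G w i j) D := fun i j => cdo_mul hBsm hBtsm i j
    have hdetsm : ContDiffOn ℝ (⊤ : ℕ∞) (fun w => (G w).det) D := cdo_det hGsm
    have hdet0 : (G w0).det ≠ 0 := by
      apply det_ne_of_rank
      show (B w0 * (B w0)ᵀ).rank = r
      rw [Matrix.rank_self_mul_transpose]
      exact hρ
    set U : Set (Vec N) := D ∩ (fun w => (G w).det) ⁻¹' {(0 : ℝ)}ᶜ with hUdef
    have hUD : U ⊆ D := Set.inter_subset_left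
    have hUopen : IsOpen U :=
      hdetsm.continuousOn.isOpen_inter_preimage hD isOpen_compl_singleton
    have hwU : w0 ∈ U := ⟨hw0, hdet0⟩
    have hdetU : ∀ w ∈ U, (G w).det ≠ 0 := fun w hw => hw.2
    have hrankB : ∀ w ∈ U, (B w).rank = r := by
      intro w hw
      have hu : IsUnit (G w) :=
        (Matrix.isUnit_iff_isUnit_det _).mpr (isUnit_iff_ne_zero.mpr (hdetU w hw))
      have := Matrix.rank_of_isUnit _ hu
      rw [Fintype.card_fin] at this
      have h2 := Matrix.rank_self_mul_transpose (B w)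
      exact h2.symm.trans this
    have hsub : ∀ (w : Vec N) (v : Fin n → ℝ), A w *ᵥ v = 0 → B w *ᵥ v = 0 := by
      intro w v hv
      funext k
      have h : (B w *ᵥ v) k = (A w *ᵥ v) (ρ k) := rfl
      rw [h, hv]
      rfl
    have hker : ∀ w ∈ U, ∀ v, A w *ᵥ v = 0 ↔ B w *ᵥ v = 0 := by
      intro w hw v
      exact ⟨hsub w v, fun hv => ker_subset (hsub w) (hrank w (hUD hw)) (hrankB w hw) hv⟩
    refine ⟨U, hUopen, hwU, hUD, fun w => 1 - (B w)ᵀ * (G w)⁻¹ * B w, ?_, ?_⟩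
    · intro i j
      have hinv : ∀ i j, ContDiffOn ℝ (⊤ : ℕ∞) (fun w => (G w)⁻¹ i j) U :=
        cdo_inv (fun i j => (hGsm i j).mono hUD) hdetU
      have h1 : ContDiffOn ℝ (⊤ : ℕ∞) (fun w => ((B w)ᵀ * (G w)⁻¹ * B w) i j) U :=
        cdo_mul (cdo_mul (fun i j => (hBtsm i j).mono hUD) hinv)
          (fun i j => (hBsm i j).mono hUD) i j
      refine ContDiffOn.congr
        (ContDiffOn.sub (contDiffOn_const (c := (1 : Matrix (Fin n) (Fin n) ℝ) i j)) h1) ?_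
      intro w hw
      simp [Matrix.sub_apply]
    · intro w hw
      have hu : IsUnit (G w).det := isUnit_iff_ne_zero.mpr (hdetU w hw)
      exact kerProj_formula hu (hker w hw)
  have exP : ∀ w ∈ D, ∃ P, KerProj (A w) P := by
    intro w hw
    obtain ⟨U, _, hwU, hUD, Q, _, hQ⟩ := key w hw
    exact ⟨Q w, hQ w hwU⟩
  refine ⟨fun w => if h : w ∈ D then (exP w h).choose else 0, ?_, ?_⟩
  · intro i j
    apply contDiffOn_of_locally_contDiffOn
    intro w0 hw0
    obtain ⟨U, hUo, hwU, hUD, Q, hQsm, hQ⟩ := key w0 hw0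
    refine ⟨U, hUo, hwU, ?_⟩
    refine ContDiffOn.congr ((hQsm i j).mono Set.inter_subset_right) ?_
    intro w hw
    have h1 : KerProj (A w) (exP w hw.1).choose := (exP w hw.1).choose_spec
    simp only [dif_pos hw.1]
    rw [kerProj_unique h1 (hQ w hw.2)]
  · intro w hw
    have h1 : KerProj (A w) (exP w hw).choose := (exP w hw).choose_spec
    simp only [dif_pos hw]
    exact ⟨h1.1, kerProj_idem h1, h1.2.1, h1.2.2⟩



end
end
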